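/- arXiv:2503.09380 — 9 statements merged into one kernel-verified Lean document; each statement's English description precedes it below -/
import Mathlib

section
/- The infinite series ∑_{n=1}^∞ 1/(n(2n-1)(4n-3)) converges to π/3. -/
/-!
With `n = k + 1`, partial fractions give
`1 / ((k+1)(2k+1)(4k+1)) = (4/3) (2/(4k+1) - 3/(4k+2) + 1/(4k+4))`, and the bracket regroups as
`L₀ + L₁ + (A₀ - A₁ + A₂ - A₃) - (B₀ - B₁)`, where `L₀, L₁` are the two Leibniz terms with
denominators `4k+1, 4k+3`, the `Aⱼ` are the alternating harmonic terms with denominators `4k+j+1`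
and the `Bⱼ` those with denominators `2k+j+1`. Summing over `k`, the first group gives `π/4` and
the other two give the same value (the sum of the alternating harmonic series, read in blocks of
length four and of length two), so they cancel and the total is `(4/3)(π/4) = π/3`.
-/

open Real Filter Finset Topology

theorem Finset.sum_range_mul_eq_sum_sum {M : Type*} [AddCommMonoid M] (f : ℕ → M) (m N : ℕ) :
    ∑ i ∈ range (m * N), f i = ∑ k ∈ range N, ∑ j ∈ range m, f (m * k + j) := by
  induction N with
  | zero => simp
  | succ N ih => rw [mul_add_one, sum_range_add, ih, sum_range_succ]

theorem Filter.Tendsto.sum_range_blocks {M : Type*} [AddCommMonoid M] [TopologicalSpace M]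
    {f : ℕ → M} {l : M} {m : ℕ} (hm : 0 < m)
    (h : Tendsto (fun n ↦ ∑ i ∈ range n, f i) atTop (𝓝 l)) :
    Tendsto (fun N ↦ ∑ k ∈ range N, ∑ j ∈ range m, f (m * k + j)) atTop (𝓝 l) := by
  simpa only [Function.comp_def, id, sum_range_mul_eq_sum_sum] using
    h.comp (tendsto_id.const_mul_atTop' hm)

theorem Real.exists_tendsto_sum_alternating_harmonic :
    ∃ l, Tendsto (fun n ↦ ∑ i ∈ range n, (-1 : ℝ) ^ i / (i + 1)) atTop (𝓝 l) := by
  simpa only [mul_one_div] using Antitone.tendsto_alternating_series_of_tendsto_zero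
    (antitone_iff_forall_lt.mpr fun _ _ _ ↦ by gcongr) tendsto_one_div_add_atTop_nhds_zero_nat

theorem one_div_mul_mul_eq_leibniz_add_harmonic_blocks (k : ℕ) :
    1 / (((k : ℝ) + 1) * (2 * k + 1) * (4 * k + 1)) =
      4 / 3 * (∑ j ∈ range 2, (-1 : ℝ) ^ (2 * k + j) / (2 * ((2 * k + j : ℕ) : ℝ) + 1)
        + ∑ j ∈ range 4, (-1 : ℝ) ^ (4 * k + j) / (((4 * k + j : ℕ) : ℝ) + 1)
        - ∑ j ∈ range 2, (-1 : ℝ) ^ (2 * k + j) / (((2 * k + j : ℕ) : ℝ) + 1)) := by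
  simp only [sum_range_succ, sum_range_zero, pow_add, pow_mul, neg_one_sq, one_pow]
  push_cast
  field_simp
  ring

theorem stmt_0 : HasSum (fun n : ℕ+ => 1 / ((n : ℝ) * (2*(n : ℝ)-1) * (4*(n : ℝ)-3))) (π / 3) := by
  rw [hasSum_pnat_iff_hasSum_succ (f := fun n : ℕ ↦ 1 / ((n : ℝ) * (2 * n - 1) * (4 * n - 3)))]
  simp only [Nat.cast_add_one, show ∀ x : ℝ, 2 * (x + 1) - 1 = 2 * x + 1 by intro; ring,
    show ∀ x : ℝ, 4 * (x + 1) - 3 = 4 * x + 1 by intro; ring]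
  refine (hasSum_iff_tendsto_nat_of_nonneg (fun k ↦ by positivity) _).mpr ?_
  obtain ⟨l, hl⟩ := exists_tendsto_sum_alternating_harmonic
  have hlim := (((tendsto_sum_pi_div_four.sum_range_blocks two_pos).add
    (hl.sum_range_blocks four_pos)).sub (hl.sum_range_blocks two_pos)).const_mul (4 / 3 : ℝ)
  simp only [← sum_add_distrib, ← sum_sub_distrib, mul_sum,
    ← one_div_mul_mul_eq_leibniz_add_harmonic_blocks] at hlim
  convert hlim using 2
  ring
end

section
/- The infinite series ∑_{n=1}^∞ 1/(n(4n-3)) converges to (π + 6 ln 2)/6. -/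
open Real Filter Finset Topology

lemma two_mul_tendsto : Tendsto (fun n : ℕ => 2*n) atTop atTop :=
  Filter.tendsto_atTop_atTop.mpr fun b => ⟨b, fun a ha => by omega⟩

lemma hD : Tendsto (fun n : ℕ => ((harmonic (2*n) : ℝ) - (harmonic n : ℝ))) atTop
    (𝓝 (Real.log 2)) := by
  have hA := (Real.tendsto_harmonic_sub_log.comp two_mul_tendsto).sub
    Real.tendsto_harmonic_sub_log
  rw [sub_self] at hA
  have hA' : Tendsto (fun n : ℕ =>
      ((harmonic (2*n) : ℝ) - (harmonic n : ℝ)) - Real.log 2) atTop (𝓝 0) := by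
    apply hA.congr'
    filter_upwards [eventually_ge_atTop 1] with n hn
    have hn0 : (0:ℝ) < n := by exact_mod_cast hn
    simp only [Function.comp]
    rw [show ((2*n : ℕ) : ℝ) = 2 * n by push_cast; ring,
      Real.log_mul two_ne_zero (ne_of_gt hn0)]
    ring
  have := hA'.add (tendsto_const_nhds (x := Real.log 2) (f := atTop (α := ℕ)))
  simpa using this

-- the key finite identity
lemma key_identity (n : ℕ) :
    ∑ k ∈ range n, (1 : ℝ) / ((k+1) * (4*(k+1)-3)) =
      (2/3) * ((∑ i ∈ range (2*n), (-1 : ℝ)^i / (2*i+1))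
        + ((harmonic (2*(2*n)) : ℝ) - (harmonic (2*n) : ℝ))
        + (1/2) * ((harmonic (2*n) : ℝ) - (harmonic n : ℝ))) := by
  induction n with
  | zero => simp
  | succ n ih =>
    have e1 : 2*(n+1) = (2*n)+1+1 := by ring
    have e2 : 2*(2*(n+1)) = (2*(2*n))+1+1+1+1 := by ring
    rw [sum_range_succ, ih, e2, e1]
    rw [sum_range_succ, sum_range_succ]
    rw [harmonic_succ, harmonic_succ, harmonic_succ, harmonic_succ, harmonic_succ,
      harmonic_succ, harmonic_succ]
    have l1 : ((-1:ℝ))^(2*n) = 1 := by rw [pow_mul]; norm_num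
    have l2 : ((-1:ℝ))^(2*n+1) = -1 := by rw [pow_succ, l1]; norm_num
    rw [l1, l2]
    push_cast
    have h1 : ((4:ℝ)*(n+1)-3) = 4*n+1 := by ring
    have h2 : (0:ℝ) < 4*n+1 := by positivity
    have h3 : (0:ℝ) < 4*n+2 := by positivity
    have h4 : (0:ℝ) < 4*n+3 := by positivity
    have h5 : (0:ℝ) < 4*n+4 := by positivity
    have h6 : (0:ℝ) < 2*n+1 := by positivity
    have h7 : (0:ℝ) < 2*n+2 := by positivity
    have h8 : (0:ℝ) < n+1 := by positivity
    rw [h1]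
    field_simp
    ring

theorem stmt_1 : HasSum (fun n : ℕ+ => 1 / ((n : ℝ) * (4*(n : ℝ)-3))) ((π + 6 * Real.log 2) / 6) := by
  rw [← Equiv.pnatEquivNat.symm.hasSum_iff]
  have hfun : ((fun n : ℕ+ => 1 / ((n : ℝ) * (4*(n : ℝ)-3))) ∘ Equiv.pnatEquivNat.symm)
      = fun k : ℕ => (1:ℝ) / ((k+1) * (4*(k+1)-3)) := by
    funext k
    simp [Equiv.pnatEquivNat, Function.comp]
  rw [hfun]
  have hnn : ∀ k : ℕ, (0:ℝ) ≤ 1 / ((k+1) * (4*(k+1)-3)) := by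
    intro k
    have h1 : (0:ℝ) ≤ (k:ℝ)+1 := by positivity
    have h2 : (0:ℝ) ≤ 4*((k:ℝ)+1)-3 := by nlinarith [show (0:ℝ) ≤ (k:ℝ) from k.cast_nonneg]
    exact div_nonneg zero_le_one (mul_nonneg h1 h2)
  rw [hasSum_iff_tendsto_nat_of_nonneg hnn]
  have hL := Real.tendsto_sum_pi_div_four.comp two_mul_tendsto
  have hD2 := hD.comp two_mul_tendsto
  have hcomb := (((hL.add hD2).add (hD.const_mul (1/2))).const_mul (2/3 : ℝ))
  have hval : (2/3 : ℝ) * ((π/4 + Real.log 2) + (1/2) * Real.log 2)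
        = (π + 6 * Real.log 2) / 6 := by ring
  rw [hval] at hcomb
  apply hcomb.congr
  intro n
  simp only [Function.comp]
  rw [key_identity n]
end

section
/- The infinite series ∑_{n=1}^∞ 1/(n(4n-1)) converges to (6 ln 2 - π)/2. -/
/-!
For `0 ≤ x < 1`, summing the geometric series gives
`∑_{n ≥ 0} 4 x^(4n+2) (1 - x) = 4x² / ((1 + x)(1 + x²))`, and the `n`-th term integrates over
`[0, 1]` to `4/(4n+3) - 4/(4n+4) = 1/((n+1)(4(n+1)-1))`. The terms are nonnegative, so the sum
and the integral commute, and the right-hand side has the elementary antiderivative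
`2 log (1 + x) + log (1 + x²) - 2 arctan x`, whose increment over `[0, 1]` is `3 log 2 - π/2`.
-/

open Real MeasureTheory intervalIntegral Set
open scoped Interval

/-- A series of nonnegative functions is its own dominating function. -/
theorem hasSum_intervalIntegral_of_nonneg {ι : Type*} [Countable ι] {μ : Measure ℝ}
    {F : ι → ℝ → ℝ} {f : ℝ → ℝ} {a b : ℝ}
    (hF_meas : ∀ n, AEStronglyMeasurable (F n) (μ.restrict (Ι a b)))
    (hF_nonneg : ∀ n, ∀ t ∈ Ι a b, 0 ≤ F n t)
    (hf : IntervalIntegrable f μ a b)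
    (h_lim : ∀ᵐ t ∂μ, t ∈ Ι a b → HasSum (fun n => F n t) (f t)) :
    HasSum (fun n => ∫ t in a..b, F n t ∂μ) (∫ t in a..b, f t ∂μ) := by
  refine hasSum_integral_of_dominated_convergence F hF_meas
    (fun n => ae_of_all _ fun t ht => (Real.norm_of_nonneg (hF_nonneg n t ht)).le)
    (h_lim.mono fun t ht hmem => (ht hmem).summable) ?_ h_lim
  refine hf.congr_ae ?_
  filter_upwards [(ae_restrict_iff' measurableSet_uIoc).mpr h_lim] with t ht
  exact ht.tsum_eq.symm

theorem hasSum_four_mul_pow_mul_one_sub {x : ℝ} (hx : |x| < 1) :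
    HasSum (fun n : ℕ => 4 * x ^ (4 * n + 2) * (1 - x))
      (4 * x ^ 2 / ((1 + x) * (1 + x ^ 2))) := by
  have hx4 : |x ^ 4| < 1 := by
    rw [abs_pow]; exact pow_lt_one₀ (abs_nonneg x) hx (by norm_num)
  have hgeom := (hasSum_geometric_of_abs_lt_one hx4).mul_left (4 * x ^ 2 * (1 - x))
  have h1x : 1 - x ≠ 0 := by linarith [le_abs_self x]
  have h1x' : 1 + x ≠ 0 := by linarith [neg_abs_le x]
  have h1x2 : 1 - x ^ 4 = (1 - x) * ((1 + x) * (1 + x ^ 2)) := by ring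
  have hterm (n : ℕ) : 4 * x ^ (4 * n + 2) * (1 - x) = 4 * x ^ 2 * (1 - x) * (x ^ 4) ^ n := by
    rw [pow_add, pow_mul]; ring
  rw [show 4 * x ^ 2 / ((1 + x) * (1 + x ^ 2)) = 4 * x ^ 2 * (1 - x) * (1 - x ^ 4)⁻¹ by
    rw [h1x2]; field_simp]
  simpa only [hterm] using hgeom

theorem integral_four_mul_pow_mul_one_sub (n : ℕ) :
    ∫ x in (0 : ℝ)..1, 4 * x ^ (4 * n + 2) * (1 - x)
      = 1 / (((n : ℝ) + 1) * (4 * ((n : ℝ) + 1) - 1)) := by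
  have hsplit : (fun x : ℝ => 4 * x ^ (4 * n + 2) * (1 - x))
      = fun x => 4 * x ^ (4 * n + 2) - 4 * x ^ (4 * n + 3) := by
    ext x; ring
  rw [hsplit, integral_sub ((intervalIntegrable_pow _).const_mul 4)
      ((intervalIntegrable_pow _).const_mul 4),
    intervalIntegral.integral_const_mul, intervalIntegral.integral_const_mul,
    integral_pow, integral_pow, one_pow, one_pow, zero_pow (by omega), zero_pow (by omega)]
  push_cast
  rw [show 4 * (n : ℝ) + 2 + 1 = 4 * n + 3 by ring,
    show 4 * ((n : ℝ) + 1) - 1 = 4 * n + 3 by ring]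
  field_simp
  ring

theorem hasDerivAt_log_one_add_arctan (x : ℝ) (hx : 1 + x ≠ 0) :
    HasDerivAt (fun y => 2 * log (1 + y) + log (1 + y ^ 2) - 2 * arctan y)
      (4 * x ^ 2 / ((1 + x) * (1 + x ^ 2))) x := by
  have hx2 : 1 + x ^ 2 ≠ 0 := by positivity
  have hlog : HasDerivAt (fun y => log (1 + y)) (1 / (1 + x)) x := by
    simpa using ((hasDerivAt_id x).const_add 1).log hx
  have hlog2 : HasDerivAt (fun y => log (1 + y ^ 2)) (2 * x / (1 + x ^ 2)) x := by
    simpa using ((hasDerivAt_pow 2 x).const_add 1).log hx2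
  refine (((hlog.const_mul 2).add hlog2).sub ((hasDerivAt_arctan x).const_mul 2)).congr_deriv ?_
  field_simp
  ring

theorem continuousOn_four_mul_sq_div :
    ContinuousOn (fun x : ℝ => 4 * x ^ 2 / ((1 + x) * (1 + x ^ 2))) (Icc 0 1) := by
  refine ContinuousOn.div (by fun_prop) (by fun_prop) fun x hx => ?_
  have : 0 < 1 + x := by linarith [hx.1]
  positivity

theorem integral_four_mul_sq_div :
    ∫ x in (0 : ℝ)..1, 4 * x ^ 2 / ((1 + x) * (1 + x ^ 2)) = (6 * log 2 - π) / 2 := by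
  rw [integral_eq_sub_of_hasDerivAt
    (fun x hx => hasDerivAt_log_one_add_arctan x
      (by rw [uIcc_of_le zero_le_one] at hx; linarith [hx.1]))
    (continuousOn_four_mul_sq_div.intervalIntegrable_of_Icc zero_le_one)]
  norm_num [arctan_one]
  ring

theorem hasSum_integral_four_mul_pow_mul_one_sub :
    HasSum (fun n : ℕ => ∫ x in (0 : ℝ)..1, 4 * x ^ (4 * n + 2) * (1 - x))
      (∫ x in (0 : ℝ)..1, 4 * x ^ 2 / ((1 + x) * (1 + x ^ 2))) := by
  refine hasSum_intervalIntegral_of_nonneg (fun n => by fun_prop) ?_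
    (continuousOn_four_mul_sq_div.intervalIntegrable_of_Icc zero_le_one) ?_
  · intro n t ht
    rw [uIoc_of_le zero_le_one] at ht
    have ht0 : 0 ≤ t := ht.1.le
    have ht1 : 0 ≤ 1 - t := by linarith [ht.2]
    positivity
  · filter_upwards [volume.ae_ne 1] with t ht1 ht
    rw [uIoc_of_le zero_le_one] at ht
    exact hasSum_four_mul_pow_mul_one_sub
      (abs_lt.mpr ⟨by linarith [ht.1], lt_of_le_of_ne ht.2 ht1⟩)

theorem stmt_2 : HasSum (fun n : ℕ+ => 1 / ((n : ℝ) * (4*(n : ℝ)-1))) ((6 * Real.log 2 - π) / 2) := by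
  rw [hasSum_pnat_iff_hasSum_succ (f := fun n : ℕ => 1 / ((n : ℝ) * (4 * (n : ℝ) - 1)))]
  have h := hasSum_integral_four_mul_pow_mul_one_sub
  simp only [integral_four_mul_pow_mul_one_sub, integral_four_mul_sq_div] at h
  simpa only [Nat.cast_add, Nat.cast_one] using h
end

section
/- The infinite series ∑_{n=1}^∞ 1/((2n-1)(4n-1)(4n-3)) converges to (ln 2)/2. -/
/-!
With `x = 4n - 2` the summand is `2 / ((x - 1) x (x + 1)) = 1 / (x - 1) - 2 / x + 1 / (x + 1)`,
so the `N`-th partial sum is `(H_{4N} - H_{2N}) - (H_{2N} - H_N) / 2` in terms of the harmonic numbers.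
Since `Hₙ - log n` converges, `H_{2N} - H_N → log 2`, and the sum is `log 2 - log 2 / 2`.
-/

open Real Filter Finset Topology

theorem tendsto_harmonic_mul_sub_harmonic {a : ℕ} (ha : 0 < a) :
    Tendsto (fun N : ℕ => (harmonic (a * N) : ℝ) - harmonic N) atTop (𝓝 (log a)) := by
  have hscaled : Tendsto (fun N : ℕ => (harmonic (a * N) : ℝ) - log ↑(a * N)) atTop
      (𝓝 eulerMascheroniConstant) :=
    tendsto_harmonic_sub_log.comp (tendsto_id.const_mul_atTop' ha)
  have hlim := (hscaled.sub tendsto_harmonic_sub_log).add_const (log a)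
  rw [sub_self, zero_add] at hlim
  refine hlim.congr' ?_
  filter_upwards [eventually_gt_atTop 0] with N hN
  rw [Nat.cast_mul, log_mul (by positivity) (by positivity)]
  ring

theorem one_div_mul_mul_eq_sub_add {x : ℝ} (hx : 1 ≤ x) :
    1 / ((2 * x - 1) * (4 * x - 1) * (4 * x - 3)) =
      1 / (4 * x - 3) - 2 / (4 * x - 2) + 1 / (4 * x - 1) := by
  have h₁ : 2 * x - 1 ≠ 0 := by linarith
  have h₂ : 4 * x - 1 ≠ 0 := by linarith
  have h₃ : 4 * x - 3 ≠ 0 := by linarith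
  have h₄ : 4 * x - 2 ≠ 0 := by linarith
  rw [div_sub_div _ _ h₃ h₄, div_add_div _ _ (mul_ne_zero h₃ h₄) h₂,
    div_eq_div_iff (by simp [*]) (by simp [*])]
  ring

theorem one_div_mul_mul_nonneg {x : ℝ} (hx : 1 ≤ x) :
    0 ≤ 1 / ((2 * x - 1) * (4 * x - 1) * (4 * x - 3)) :=
  one_div_nonneg.mpr (mul_nonneg (mul_nonneg (by linarith) (by linarith)) (by linarith))

theorem sum_range_one_div_mul_mul (N : ℕ) :
    ∑ n ∈ range N, 1 / ((2 * ((n + 1 : ℕ) : ℝ) - 1) * (4 * ((n + 1 : ℕ) : ℝ) - 1) *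
        (4 * ((n + 1 : ℕ) : ℝ) - 3)) =
      ((harmonic (2 * (2 * N)) : ℝ) - harmonic (2 * N)) -
        ((harmonic (2 * N) : ℝ) - harmonic N) / 2 := by
  induction N with
  | zero => simp
  | succ N ih =>
    rw [sum_range_succ, ih, one_div_mul_mul_eq_sub_add (by simp),
      show 2 * (2 * (N + 1)) = 2 * (2 * N) + 1 + 1 + 1 + 1 by ring,
      show 2 * (N + 1) = 2 * N + 1 + 1 by ring]
    simp only [harmonic_succ]
    push_cast
    ring_nf
    field_simp
    ring

theorem stmt_4 : HasSum (fun n : ℕ+ => 1 / ((2*(n : ℝ)-1) * (4*(n : ℝ)-1) * (4*(n : ℝ)-3))) (Real.log 2 / 2) := by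
  rw [hasSum_pnat_iff_hasSum_succ (f := fun n : ℕ => 1 / ((2 * (n : ℝ) - 1) * (4 * (n : ℝ) - 1) *
    (4 * (n : ℝ) - 3)))]
  rw [hasSum_iff_tendsto_nat_of_nonneg fun n => one_div_mul_mul_nonneg (x := ((n + 1 : ℕ) : ℝ))
    (by simp)]
  simp_rw [sum_range_one_div_mul_mul]
  have hdouble := tendsto_harmonic_mul_sub_harmonic two_pos
  rw [Nat.cast_ofNat] at hdouble
  rw [show log 2 / 2 = log 2 - log 2 / 2 by ring]
  exact (hdouble.comp (tendsto_id.const_mul_atTop' two_pos)).sub (hdouble.div_const 2)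
end

section
/- The infinite series ∑_{n=1}^∞ 1/((4n+1)(4n-1)(4n-3)) converges to (π - 2)/16. -/
open Real Filter Finset

private noncomputable def g (n : ℕ) : ℝ := 1 / ((4*(n:ℝ)+5) * (4*(n:ℝ)+3) * (4*(n:ℝ)+1))

private lemma g_nonneg (n : ℕ) : 0 ≤ g n := by
  unfold g; positivity

private lemma key (N : ℕ) :
    ∑ n ∈ range N, g n
      = (2 * ∑ i ∈ range (2*N), (-1:ℝ)^i/(2*i+1) - 1 + 1/(4*(N:ℝ)+1)) / 8 := by
  induction N with
  | zero => simp
  | succ N ih =>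
    rw [Finset.sum_range_succ, ih, show 2*(N+1) = (2*N+1)+1 by ring,
        Finset.sum_range_succ, Finset.sum_range_succ]
    have h1 : (4*(N:ℝ)+1) ≠ 0 := by positivity
    have h2 : (4*(N:ℝ)+3) ≠ 0 := by positivity
    have h3 : (4*(N:ℝ)+5) ≠ 0 := by positivity
    have e1 : ((-1:ℝ))^(2*N) = 1 := by simp [pow_mul]
    have e2 : ((-1:ℝ))^(2*N+1) = -1 := by simp [pow_succ, pow_mul]
    unfold g
    rw [e1, e2]
    push_cast
    rw [show (4*((N:ℝ)+1)+1) = 4*(N:ℝ)+5 by ring]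
    field_simp
    ring

theorem stmt_5 : HasSum (fun n : ℕ+ => 1 / ((4*(n : ℝ)+1) * (4*(n : ℝ)-1) * (4*(n : ℝ)-3))) ((π - 2) / 16) := by
  have hcomp : HasSum (fun n : ℕ =>
      (fun n : ℕ+ => 1 / ((4*(n : ℝ)+1) * (4*(n : ℝ)-1) * (4*(n : ℝ)-3))) (Equiv.pnatEquivNat.symm n))
      ((π - 2) / 16) := by
    have hg : (fun n : ℕ =>
        (fun n : ℕ+ => 1 / ((4*(n : ℝ)+1) * (4*(n : ℝ)-1) * (4*(n : ℝ)-3))) (Equiv.pnatEquivNat.symm n)) = g := by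
      funext n
      have : ((Equiv.pnatEquivNat.symm n : ℕ+) : ℝ) = (n : ℝ) + 1 := by
        simp [Equiv.pnatEquivNat, Nat.succPNat]
      simp only [this]
      unfold g
      ring_nf
    rw [hg, hasSum_iff_tendsto_nat_of_nonneg g_nonneg]
    have hL : Tendsto (fun N : ℕ => ∑ i ∈ range (2*N), (-1:ℝ)^i/(2*i+1)) atTop (nhds (π/4)) :=
      tendsto_sum_pi_div_four.comp
        (strictMono_nat_of_lt_succ (fun n => by omega : ∀ n, 2*n < 2*(n+1))).tendsto_atTop
    have hz : Tendsto (fun N : ℕ => 1/(4*(N:ℝ)+1)) atTop (nhds 0) := by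
      apply squeeze_zero' (g := fun n : ℕ => 1/(n:ℝ))
        (Eventually.of_forall fun n => by positivity)
      · filter_upwards [eventually_ge_atTop 1] with n hn
        apply one_div_le_one_div_of_le (by exact_mod_cast hn)
        have : (1:ℝ) ≤ n := by exact_mod_cast hn
        linarith
      · exact tendsto_one_div_atTop_nhds_zero_nat
    have : Tendsto (fun N : ℕ => (2 * ∑ i ∈ range (2*N), (-1:ℝ)^i/(2*i+1) - 1 + 1/(4*(N:ℝ)+1)) / 8)
        atTop (nhds ((2*(π/4) - 1 + 0)/8)) := by
      exact (((hL.const_mul 2).sub_const 1).add hz).div_const 8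
    have heq : ((2*(π/4) - 1 + 0)/8 : ℝ) = (π - 2)/16 := by ring
    rw [heq] at this
    convert this using 1
    funext N
    rw [key N]
  exact Equiv.pnatEquivNat.symm.hasSum_iff.mp hcomp
end

section
/- The infinite series ∑_{n=1}^∞ 1/(n(2n-1)(4n-1)(4n-3)) converges to 2 ln 2 - π/3. -/
open Real Filter Finset

open scoped Topology

noncomputable def Hh (n : ℕ) : ℝ := (harmonic n : ℝ)

noncomputable def Ll (n : ℕ) : ℝ := ∑ i ∈ Finset.range n, (-1 : ℝ) ^ i / (2 * i + 1)

lemma key_formula (N : ℕ) :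
    ∑ k ∈ Finset.range N, (1 : ℝ) / (((k:ℝ)+1) * (2*(k:ℝ)+1) * (4*(k:ℝ)+3) * (4*(k:ℝ)+1))
      = (2/3) * Hh N - (10/3) * Hh (2*N) + (8/3) * Hh (4*N) - (4/3) * Ll (2*N) := by
  induction N with
  | zero => simp [Hh, Ll]
  | succ n ih =>
    rw [Finset.sum_range_succ, ih]
    have h2 : 2*(n+1) = 2*n + 1 + 1 := by ring
    have h4 : 4*(n+1) = 4*n + 1 + 1 + 1 + 1 := by ring
    rw [h2, h4]
    simp only [Hh, Ll, harmonic_succ, Finset.sum_range_succ]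
    have e1 : (-1:ℝ)^(2*n) = 1 := by rw [pow_mul]; norm_num
    have e2 : (-1:ℝ)^(2*n+1) = -1 := by rw [pow_succ, e1]; ring
    rw [e1, e2]
    push_cast
    have d1 : ((n:ℝ)+1) ≠ 0 := by positivity
    have d2 : (2*(n:ℝ)+1) ≠ 0 := by positivity
    have d3 : (2*(n:ℝ)+2) ≠ 0 := by positivity
    have d4 : (4*(n:ℝ)+1) ≠ 0 := by positivity
    have d5 : (4*(n:ℝ)+2) ≠ 0 := by positivity
    have d6 : (4*(n:ℝ)+3) ≠ 0 := by positivity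
    have d7 : (4*(n:ℝ)+4) ≠ 0 := by positivity
    field_simp
    ring

lemma mainN : HasSum (fun k : ℕ => (1:ℝ) / (((k:ℝ)+1) * (2*(k:ℝ)+1) * (4*(k:ℝ)+3) * (4*(k:ℝ)+1)))
    (2 * Real.log 2 - π / 3) := by
  rw [hasSum_iff_tendsto_nat_of_nonneg (fun k => by positivity)]
  have htwo : Tendsto (fun N : ℕ => 2 * N) atTop atTop :=
    tendsto_atTop_mono (fun n => by simp; omega) tendsto_id
  have hfour : Tendsto (fun N : ℕ => 4 * N) atTop atTop :=
    tendsto_atTop_mono (fun n => by simp; omega) tendsto_id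
  have hγ : Tendsto (fun n : ℕ => Hh n - Real.log n) atTop (𝓝 Real.eulerMascheroniConstant) :=
    Real.tendsto_harmonic_sub_log
  have h2γ : Tendsto (fun n : ℕ => Hh (2*n) - Real.log ((2*n : ℕ))) atTop
      (𝓝 Real.eulerMascheroniConstant) := hγ.comp htwo
  have h4γ : Tendsto (fun n : ℕ => Hh (4*n) - Real.log ((4*n : ℕ))) atTop
      (𝓝 Real.eulerMascheroniConstant) := hγ.comp hfour
  have hL : Tendsto (fun N : ℕ => Ll (2*N)) atTop (𝓝 (π/4)) :=
    Real.tendsto_sum_pi_div_four.comp htwo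
  have hcomb : Tendsto (fun N : ℕ =>
      (2/3)*(Hh N - Real.log N) - (10/3)*(Hh (2*N) - Real.log ((2*N : ℕ)))
        + (8/3)*(Hh (4*N) - Real.log ((4*N : ℕ))) - (4/3)*Ll (2*N) + 2*Real.log 2) atTop
      (𝓝 ((2/3)*Real.eulerMascheroniConstant - (10/3)*Real.eulerMascheroniConstant
        + (8/3)*Real.eulerMascheroniConstant - (4/3)*(π/4) + 2*Real.log 2)) :=
    ((((hγ.const_mul _).sub (h2γ.const_mul _)).add (h4γ.const_mul _)).sub
      (hL.const_mul _)).add_const _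
  have hval : (2/3)*Real.eulerMascheroniConstant - (10/3)*Real.eulerMascheroniConstant
        + (8/3)*Real.eulerMascheroniConstant - (4/3)*(π/4) + 2*Real.log 2
      = 2 * Real.log 2 - π / 3 := by ring
  rw [hval] at hcomb
  refine hcomb.congr' ?_
  filter_upwards [eventually_ge_atTop 1] with N hN
  have hN0 : (N:ℝ) ≠ 0 := by positivity
  have l2 : Real.log (↑(2*N)) = Real.log 2 + Real.log N := by
    push_cast; rw [Real.log_mul (by norm_num) hN0]
  have l4 : Real.log (↑(4*N)) = 2 * Real.log 2 + Real.log N := by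
    push_cast
    rw [show (4:ℝ)*N = 2^2 * N by ring, Real.log_mul (by norm_num) hN0, Real.log_pow]
    push_cast; ring
  rw [l2, l4, key_formula]
  ring

theorem stmt_6 : HasSum (fun n : ℕ+ => 1 / ((n : ℝ) * (2*(n : ℝ)-1) * (4*(n : ℝ)-1) * (4*(n : ℝ)-3))) (2 * Real.log 2 - π / 3) := by
  refine (Equiv.pnatEquivNat.symm.hasSum_iff).mp ?_
  have hfun : ((fun n : ℕ+ => 1 / ((n : ℝ) * (2*(n : ℝ)-1) * (4*(n : ℝ)-1) * (4*(n : ℝ)-3)))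
      ∘ Equiv.pnatEquivNat.symm)
      = fun k : ℕ => (1:ℝ) / (((k:ℝ)+1) * (2*(k:ℝ)+1) * (4*(k:ℝ)+3) * (4*(k:ℝ)+1)) := by
    funext k
    simp only [Function.comp_apply, Equiv.pnatEquivNat_symm_apply]
    have : ((k.succPNat : ℕ+) : ℝ) = (k:ℝ) + 1 := by
      rw [show ((k.succPNat : ℕ+) : ℝ) = ((k.succPNat : ℕ) : ℝ) from rfl, Nat.succPNat_coe]
      push_cast; ring
    rw [this]; ring_nf
  rw [hfun]
  exact mainN
end

section
/- The infinite series ∑_{n=1}^∞ 1/((2n-1)(4n+1)(4n-1)(4n-3)) converges to (1/6)(ln 2 - π/4 + 1/2). -/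
open Real Filter Finset Topology

private noncomputable def Aseq (m : ℕ) : ℝ := ∑ j ∈ Finset.range m, (-1 : ℝ) ^ j / (j + 1)

private noncomputable def Lseq (m : ℕ) : ℝ := ∑ i ∈ Finset.range m, (-1 : ℝ) ^ i / (2 * i + 1)

private lemma Aseq_two_mul (n : ℕ) : Aseq (2 * n) = (harmonic (2 * n) : ℝ) - (harmonic n : ℝ) := by
  induction n with
  | zero => simp [Aseq]
  | succ n ih =>
    have h1 : 2 * (n + 1) = (2 * n) + 1 + 1 := by ring
    rw [h1, Aseq, Finset.sum_range_succ, Finset.sum_range_succ, ← Aseq, ih,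
      harmonic_succ (2 * n + 1), harmonic_succ (2 * n), harmonic_succ n]
    have hpow : (-1 : ℝ) ^ (2 * n) = 1 := by rw [pow_mul]; norm_num
    rw [pow_succ, hpow]
    push_cast
    have hn1 : (n : ℝ) + 1 ≠ 0 := by positivity
    have hn2 : 2 * (n : ℝ) + 1 ≠ 0 := by positivity
    have hn3 : 2 * (n : ℝ) + 1 + 1 ≠ 0 := by positivity
    field_simp
    ring

private lemma tendsto_Aseq_two_mul :
    Tendsto (fun n : ℕ => Aseq (2 * n)) atTop (𝓝 (Real.log 2)) := by
  have h2 : Tendsto (fun n : ℕ => 2 * n) atTop atTop :=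
    tendsto_atTop_atTop_of_monotone (fun a b h => by omega) (fun b => ⟨b, by omega⟩)
  have hu := Real.tendsto_harmonic_sub_log
  have hu2 : Tendsto (fun n : ℕ => (harmonic (2 * n) : ℝ) - Real.log (2 * n)) atTop
      (𝓝 Real.eulerMascheroniConstant) := by
    have := hu.comp h2
    apply this.congr
    intro n
    simp only [Function.comp]
    push_cast
    ring_nf
  have key : Tendsto (fun n : ℕ => ((harmonic (2 * n) : ℝ) - Real.log (2 * n)) -
      ((harmonic n : ℝ) - Real.log n) + Real.log 2) atTop (𝓝 (Real.log 2)) := by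
    have := (hu2.sub hu).add_const (Real.log 2)
    simpa using this
  apply key.congr'
  filter_upwards [eventually_gt_atTop 0] with n hn
  have hn' : (0 : ℝ) < n := by exact_mod_cast hn
  have hlog : Real.log (2 * n) = Real.log 2 + Real.log n := by
    rw [← Real.log_mul (by norm_num) hn'.ne']
  rw [Aseq_two_mul]
  push_cast [hlog]
  try ring

private noncomputable def gseq (k : ℕ) : ℝ :=
  1 / ((2 * (k : ℝ) + 1) * (4 * (k : ℝ) + 5) * (4 * (k : ℝ) + 3) * (4 * (k : ℝ) + 1))

private lemma gseq_partial (N : ℕ) :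
    ∑ k ∈ Finset.range N, gseq k =
      (1 / 3) * Aseq (4 * N) - (1 / 6) * Aseq (2 * N) - (1 / 6) * Lseq (2 * N)
        + 1 / 12 - (1 / 12) / (4 * (N : ℝ) + 1) := by
  induction N with
  | zero => simp [Aseq, Lseq]
  | succ N ih =>
    rw [Finset.sum_range_succ, ih]
    have hA : 4 * (N + 1) = 4 * N + 1 + 1 + 1 + 1 := by ring
    have hL : 2 * (N + 1) = 2 * N + 1 + 1 := by ring
    have hAstep : ∀ m : ℕ, Aseq (m + 1) = Aseq m + (-1 : ℝ) ^ m / (m + 1) := fun m => by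
      rw [Aseq, Finset.sum_range_succ, ← Aseq]
    have hLstep : ∀ m : ℕ, Lseq (m + 1) = Lseq m + (-1 : ℝ) ^ m / (2 * m + 1) := fun m => by
      rw [Lseq, Finset.sum_range_succ, ← Lseq]
    rw [hA, hL, hAstep (4 * N + 1 + 1 + 1), hAstep (4 * N + 1 + 1), hAstep (4 * N + 1),
      hAstep (4 * N), hAstep (2 * N + 1), hAstep (2 * N), hLstep (2 * N + 1), hLstep (2 * N)]
    have p0 : (-1 : ℝ) ^ (4 * N) = 1 := by rw [pow_mul]; norm_num
    have p1 : (-1 : ℝ) ^ (4 * N + 1) = -1 := by rw [pow_succ, p0]; norm_num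
    have p2 : (-1 : ℝ) ^ (4 * N + 1 + 1) = 1 := by rw [pow_succ, p1]; norm_num
    have p3 : (-1 : ℝ) ^ (4 * N + 1 + 1 + 1) = -1 := by rw [pow_succ, p2]; norm_num
    have q0 : (-1 : ℝ) ^ (2 * N) = 1 := by rw [pow_mul]; norm_num
    have q1 : (-1 : ℝ) ^ (2 * N + 1) = -1 := by rw [pow_succ, q0]; norm_num
    rw [p0, p1, p2, p3, q0, q1]
    unfold gseq
    push_cast
    have h1 : (2 * (N : ℝ) + 1) ≠ 0 := by positivity
    have h2 : (4 * (N : ℝ) + 5) ≠ 0 := by positivity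
    have h3 : (4 * (N : ℝ) + 3) ≠ 0 := by positivity
    have h4 : (4 * (N : ℝ) + 1) ≠ 0 := by positivity
    have h5 : (4 * (N : ℝ) + 2) ≠ 0 := by positivity
    have h6 : (4 * (N : ℝ) + 4) ≠ 0 := by positivity
    have h7 : (4 * ((N : ℝ) + 1) + 1) ≠ 0 := by positivity
    have h8 : (2 * ((N : ℝ) + 1) + 1) ≠ 0 := by positivity
    field_simp
    ring

private lemma tendsto_gseq_partial :
    Tendsto (fun N : ℕ => ∑ k ∈ Finset.range N, gseq k) atTop
      (𝓝 ((1 / 6) * (Real.log 2 - π / 4 + 1 / 2))) := by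
  have hA4 : Tendsto (fun N : ℕ => Aseq (4 * N)) atTop (𝓝 (Real.log 2)) := by
    have h2 : Tendsto (fun n : ℕ => 2 * n) atTop atTop :=
      tendsto_atTop_atTop_of_monotone (fun a b h => by omega) (fun b => ⟨b, by omega⟩)
    have h4 := tendsto_Aseq_two_mul.comp h2
    apply h4.congr
    intro n
    simp only [Function.comp]
    congr 1
    ring
  have hL2 : Tendsto (fun N : ℕ => Lseq (2 * N)) atTop (𝓝 (π / 4)) := by
    have h2 : Tendsto (fun n : ℕ => 2 * n) atTop atTop :=
      tendsto_atTop_atTop_of_monotone (fun a b h => by omega) (fun b => ⟨b, by omega⟩)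
    exact Real.tendsto_sum_pi_div_four.comp h2
  have htail : Tendsto (fun N : ℕ => (1 / 12 : ℝ) / (4 * (N : ℝ) + 1)) atTop (𝓝 0) := by
    apply Tendsto.div_atTop tendsto_const_nhds
    apply tendsto_atTop_add_const_right
    exact (tendsto_natCast_atTop_atTop (R := ℝ)).const_mul_atTop (by norm_num)
  have key : Tendsto (fun N : ℕ =>
      (1 / 3) * Aseq (4 * N) - (1 / 6) * Aseq (2 * N) - (1 / 6) * Lseq (2 * N)
        + 1 / 12 - (1 / 12) / (4 * (N : ℝ) + 1))
      atTop (𝓝 ((1 / 3) * Real.log 2 - (1 / 6) * Real.log 2 - (1 / 6) * (π / 4) + 1 / 12 - 0)) := by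
    exact ((((hA4.const_mul (1/3)).sub (tendsto_Aseq_two_mul.const_mul (1/6))).sub
      (hL2.const_mul (1/6))).add_const (1/12)).sub htail
  have : (1 / 3 : ℝ) * Real.log 2 - (1 / 6) * Real.log 2 - (1 / 6) * (π / 4) + 1 / 12 - 0 =
      (1 / 6) * (Real.log 2 - π / 4 + 1 / 2) := by ring
  rw [this] at key
  exact key.congr (fun N => (gseq_partial N).symm)

private lemma hasSum_gseq :
    HasSum gseq ((1 / 6) * (Real.log 2 - π / 4 + 1 / 2)) := by
  rw [hasSum_iff_tendsto_nat_of_nonneg]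
  · exact tendsto_gseq_partial
  · intro i
    unfold gseq
    positivity

theorem stmt_8 : HasSum (fun n : ℕ+ => 1 / ((2*(n : ℝ)-1) * (4*(n : ℝ)+1) * (4*(n : ℝ)-1) * (4*(n : ℝ)-3))) ((1 / 6) * (Real.log 2 - π / 4 + 1 / 2)) := by
  rw [← Equiv.pnatEquivNat.symm.hasSum_iff]
  have : (fun n : ℕ+ => 1 / ((2*(n : ℝ)-1) * (4*(n : ℝ)+1) * (4*(n : ℝ)-1) * (4*(n : ℝ)-3)))
      ∘ Equiv.pnatEquivNat.symm = gseq := by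
    ext k
    simp only [Function.comp, Equiv.pnatEquivNat, Equiv.coe_fn_symm_mk, gseq]
    have : ((k.succPNat : ℕ) : ℝ) = (k : ℝ) + 1 := by
      simp [Nat.succPNat]
    rw [this]
    ring_nf
  rw [this]
  exact hasSum_gseq
end

section
/- The infinite series ∑_{n=1}^∞ 1/(n(2n-1)(4n+1)(4n-3)) converges to (2/3)(1 - ln 2). -/
open Real Filter Topology Finset

private lemma tel_hasSum :
    HasSum (fun n : ℕ => (2/3 : ℝ) * (1/(4*(n:ℝ)+1) - 1/(4*(n:ℝ)+5))) (2/3) := by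
  have hnn : ∀ n : ℕ, 0 ≤ (2/3 : ℝ) * (1/(4*(n:ℝ)+1) - 1/(4*(n:ℝ)+5)) := by
    intro n
    have h1 : (0:ℝ) < 4*(n:ℝ)+1 := by positivity
    have : (1:ℝ)/(4*(n:ℝ)+5) ≤ 1/(4*(n:ℝ)+1) :=
      one_div_le_one_div_of_le h1 (by linarith)
    linarith
  rw [hasSum_iff_tendsto_nat_of_nonneg hnn]
  have hps : ∀ N : ℕ, ∑ i ∈ range N, (2/3 : ℝ) * (1/(4*(i:ℝ)+1) - 1/(4*(i:ℝ)+5))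
      = 2/3 - (2/3) * (1/(4*(N:ℝ)+1)) := by
    intro N
    have h := Finset.sum_range_sub' (fun i : ℕ => (2/3 : ℝ) * (1/(4*(i:ℝ)+1))) N
    have hL : ∑ i ∈ range N, (2/3 : ℝ) * (1/(4*(i:ℝ)+1) - 1/(4*(i:ℝ)+5))
        = ∑ i ∈ range N, ((2/3 : ℝ) * (1/(4*(i:ℝ)+1)) - (2/3 : ℝ) * (1/(4*((i+1:ℕ):ℝ)+1))) :=
      Finset.sum_congr rfl (fun i _ => by push_cast; ring)
    rw [hL, h]
    norm_num
  simp only [hps]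
  have h0 : Tendsto (fun N : ℕ => 1/(4*(N:ℝ)+1)) atTop (𝓝 0) := by
    simp only [one_div]
    apply Tendsto.inv_tendsto_atTop
    apply Filter.tendsto_atTop_add_const_right
    exact (tendsto_natCast_atTop_atTop (R := ℝ)).const_mul_atTop (by norm_num)
  have := (tendsto_const_nhds (x := (2/3 : ℝ)) (f := atTop)).sub (h0.const_mul (2/3))
  simpa using this

private lemma harm_partial : ∀ N : ℕ,
    ∑ i ∈ range N, ((1:ℝ)/(2*(i:ℝ)+1) - 1/(2*(i:ℝ)+2))
      = (harmonic (2*N) : ℝ) - (harmonic N : ℝ) := by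
  intro N
  induction N with
  | zero => simp
  | succ N ih =>
    rw [Finset.sum_range_succ, ih]
    have h2 : 2*(N+1) = (2*N+1)+1 := by ring
    rw [h2, harmonic_succ, harmonic_succ, harmonic_succ]
    have hx : ((N:ℝ)+1) ≠ 0 := by positivity
    have hy : (2*(N:ℝ)+1) ≠ 0 := by positivity
    have hz : (2*(N:ℝ)+2) ≠ 0 := by positivity
    push_cast
    field_simp
    ring

private lemma log_hasSum :
    HasSum (fun n : ℕ => (1:ℝ)/(2*(n:ℝ)+1) - 1/(2*(n:ℝ)+2)) (Real.log 2) := by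
  have hnn : ∀ n : ℕ, 0 ≤ (1:ℝ)/(2*(n:ℝ)+1) - 1/(2*(n:ℝ)+2) := by
    intro n
    have h1 : (0:ℝ) < 2*(n:ℝ)+1 := by positivity
    have : (1:ℝ)/(2*(n:ℝ)+2) ≤ 1/(2*(n:ℝ)+1) :=
      one_div_le_one_div_of_le h1 (by linarith)
    linarith
  rw [hasSum_iff_tendsto_nat_of_nonneg hnn]
  simp only [harm_partial]
  have t2 : Tendsto (fun N : ℕ => 2*N) atTop atTop :=
    tendsto_atTop_mono (fun n => Nat.le_mul_of_pos_left n two_pos) tendsto_id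
  have h1 := Real.tendsto_harmonic_sub_log.comp t2
  have h2 := Real.tendsto_harmonic_sub_log
  have h3 := (h1.sub h2).add (tendsto_const_nhds (x := Real.log 2) (f := atTop))
  rw [sub_self, zero_add] at h3
  apply h3.congr'
  filter_upwards [eventually_ge_atTop 1] with N hN
  have hN0 : (N:ℝ) ≠ 0 := Nat.cast_ne_zero.mpr (by omega)
  simp only [Function.comp]
  push_cast
  rw [Real.log_mul two_ne_zero hN0]
  ring

private lemma key_hasSum :
    HasSum (fun n : ℕ => 1 / (((n:ℝ)+1) * (2*((n:ℝ)+1)-1) * (4*((n:ℝ)+1)+1) * (4*((n:ℝ)+1)-3)))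
      ((2 / 3) * (1 - Real.log 2)) := by
  have hlog := (log_hasSum.mul_left (2/3 : ℝ)).neg
  have h := tel_hasSum.add hlog
  have hfun : ∀ n : ℕ,
      (2/3 : ℝ) * (1/(4*(n:ℝ)+1) - 1/(4*(n:ℝ)+5))
        + -((2/3 : ℝ) * ((1:ℝ)/(2*(n:ℝ)+1) - 1/(2*(n:ℝ)+2)))
      = 1 / (((n:ℝ)+1) * (2*((n:ℝ)+1)-1) * (4*((n:ℝ)+1)+1) * (4*((n:ℝ)+1)-3)) := by
    intro n
    have h1 : (0:ℝ) < 4*(n:ℝ)+1 := by positivity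
    have h2 : (0:ℝ) < 4*(n:ℝ)+5 := by positivity
    have h3 : (0:ℝ) < 2*(n:ℝ)+1 := by positivity
    have h4 : (0:ℝ) < 2*(n:ℝ)+2 := by positivity
    have h5 : (0:ℝ) < (n:ℝ)+1 := by positivity
    have hD : (0:ℝ) < ((n:ℝ)+1) * (2*((n:ℝ)+1)-1) * (4*((n:ℝ)+1)+1) * (4*((n:ℝ)+1)-3) :=
      mul_pos (mul_pos (mul_pos h5 (by linarith)) (by linarith)) (by linarith)
    rw [eq_div_iff hD.ne']
    field_simp
    ring
  have hval : (2/3 : ℝ) + -((2/3 : ℝ) * Real.log 2) = (2/3) * (1 - Real.log 2) := by ring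
  rw [← hval]
  have hext : (fun n : ℕ => (2/3 : ℝ) * (1/(4*(n:ℝ)+1) - 1/(4*(n:ℝ)+5))
        + -((2/3 : ℝ) * ((1:ℝ)/(2*(n:ℝ)+1) - 1/(2*(n:ℝ)+2))))
      = fun n : ℕ => 1 / (((n:ℝ)+1) * (2*((n:ℝ)+1)-1) * (4*((n:ℝ)+1)+1) * (4*((n:ℝ)+1)-3)) :=
    funext hfun
  exact hext ▸ h

theorem stmt_9 : HasSum (fun n : ℕ+ => 1 / ((n : ℝ) * (2*(n : ℝ)-1) * (4*(n : ℝ)+1) * (4*(n : ℝ)-3))) ((2 / 3) * (1 - Real.log 2)) := by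
  rw [← Equiv.pnatEquivNat.symm.hasSum_iff]
  have := key_hasSum
  have hext : ((fun n : ℕ+ => 1 / ((n : ℝ) * (2*(n : ℝ)-1) * (4*(n : ℝ)+1) * (4*(n : ℝ)-3)))
        ∘ ⇑Equiv.pnatEquivNat.symm)
      = fun n : ℕ => 1 / (((n:ℝ)+1) * (2*((n:ℝ)+1)-1) * (4*((n:ℝ)+1)+1) * (4*((n:ℝ)+1)-3)) := by
    funext n
    simp [Equiv.pnatEquivNat, Function.comp, Nat.succPNat]
  rw [hext]
  exact this
end

section
/- The infinite series ∑_{n=1}^∞ 1/(n(2n-1)(4n+1)(4n-1)(4n-3)) converges to (1/3)(4 ln 2 - π/2 - 1). -/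
open Real Filter Finset Topology

private noncomputable def gg10 : ℕ → ℝ := fun n =>
  1/(((n:ℝ)+1) * (2*(n:ℝ)+1) * (4*(n:ℝ)+5) * (4*(n:ℝ)+3) * (4*(n:ℝ)+1))

private lemma gg10_nonneg (n : ℕ) : 0 ≤ gg10 n := by
  have hx : (0:ℝ) ≤ (n:ℝ) := Nat.cast_nonneg n
  unfold gg10; positivity

private lemma gg10_summable : Summable gg10 := by
  have hbase : Summable (fun n : ℕ => 1/((n:ℝ)+1)^2) := by
    have h := (summable_nat_add_iff 1).mpr
      (summable_one_div_nat_pow.mpr one_lt_two : Summable (fun n : ℕ => 1/(n:ℝ)^2))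
    apply h.congr
    intro n; push_cast; ring
  apply Summable.of_nonneg_of_le gg10_nonneg _ hbase
  intro n
  set x := (n:ℝ) with hxdef
  have hx : (0:ℝ) ≤ x := Nat.cast_nonneg n
  have key : (x+1)^2 ≤ (x+1) * (2*x+1) * (4*x+5) * (4*x+3) * (4*x+1) := by
    calc (x+1)^2 ≤ (x+1)*(2*x+1) := by nlinarith
      _ = (x+1)*(2*x+1) * 1 := by ring
      _ ≤ ((x+1)*(2*x+1)) * ((4*x+5)*(4*x+3)*(4*x+1)) := by
          apply mul_le_mul_of_nonneg_left _ (by positivity)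
          nlinarith [mul_nonneg hx hx, mul_nonneg (mul_nonneg hx hx) hx]
      _ = _ := by ring
  unfold gg10
  rw [div_le_div_iff₀ (by positivity) (by positivity)]
  nlinarith [key]

private lemma psum1_10 (N : ℕ) : ∑ n ∈ Finset.range N, (1/(4*(n:ℝ)+1) - 1/(4*(n:ℝ)+3))
    = ∑ i ∈ Finset.range (2*N), (-1:ℝ)^i/(2*(i:ℝ)+1) := by
  induction N with
  | zero => simp
  | succ N ih =>
    rw [Finset.sum_range_succ, ih, Nat.mul_succ, show 2*N+2 = (2*N+1)+1 from rfl,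
      Finset.sum_range_succ, Finset.sum_range_succ]
    have h1 : ((-1:ℝ))^(2*N) = 1 := by rw [pow_mul]; norm_num
    have h2 : ((-1:ℝ))^(2*N+1) = -1 := by rw [pow_succ, h1]; ring
    rw [h1, h2]
    push_cast
    ring

private lemma psum2_10 (N : ℕ) : ∑ n ∈ Finset.range N,
      (1/(4*(n:ℝ)+1) - 1/(4*(n:ℝ)+2) + 1/(4*(n:ℝ)+3) - 1/(4*(n:ℝ)+4))
    = ((harmonic (4*N) : ℝ) - (harmonic (2*N) : ℝ)) := by
  induction N with
  | zero => simp
  | succ N ih =>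
    rw [Finset.sum_range_succ, ih, show 4*(N+1) = (4*N+1+1+1)+1 from by ring,
      show 2*(N+1) = (2*N+1)+1 from by ring,
      harmonic_succ, harmonic_succ, harmonic_succ, harmonic_succ, harmonic_succ, harmonic_succ]
    have hx : (0:ℝ) ≤ (N:ℝ) := Nat.cast_nonneg N
    push_cast
    have h1 : 4*(N:ℝ)+1 ≠ 0 := by positivity
    have h2 : 4*(N:ℝ)+2 ≠ 0 := by positivity
    have h3 : 4*(N:ℝ)+3 ≠ 0 := by positivity
    have h4 : 4*(N:ℝ)+4 ≠ 0 := by positivity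
    have h5 : 2*(N:ℝ)+1 ≠ 0 := by positivity
    have h6 : 2*(N:ℝ)+2 ≠ 0 := by positivity
    field_simp
    ring

private lemma psum3_10 (N : ℕ) : ∑ n ∈ Finset.range N, (1/(4*(n:ℝ)+5) - 1/(4*(n:ℝ)+1))
    = 1/(4*(N:ℝ)+1) - 1 := by
  induction N with
  | zero => simp
  | succ N ih =>
    rw [Finset.sum_range_succ, ih]
    push_cast
    ring

private lemma tend1_10 : Tendsto (fun N : ℕ => ∑ i ∈ Finset.range (2*N), (-1:ℝ)^i/(2*(i:ℝ)+1))
    atTop (𝓝 (π/4)) := by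
  have h2 : Tendsto (fun N : ℕ => 2*N) atTop atTop :=
    tendsto_atTop_mono (fun n => by simp only [id_eq]; omega) tendsto_id
  exact Real.tendsto_sum_pi_div_four.comp h2

private lemma tend2_10 : Tendsto (fun N : ℕ => ((harmonic (4*N) : ℝ) - (harmonic (2*N) : ℝ)))
    atTop (𝓝 (Real.log 2)) := by
  have h4 : Tendsto (fun N : ℕ => 4*N) atTop atTop :=
    tendsto_atTop_mono (fun n => by simp only [id_eq]; omega) tendsto_id
  have h2 : Tendsto (fun N : ℕ => 2*N) atTop atTop :=
    tendsto_atTop_mono (fun n => by simp only [id_eq]; omega) tendsto_id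
  have hA := Real.tendsto_harmonic_sub_log.comp h4
  have hB := Real.tendsto_harmonic_sub_log.comp h2
  have hdiff := hA.sub hB
  simp only [Function.comp] at hdiff
  have h := hdiff.add (tendsto_const_nhds : Tendsto (fun _ : ℕ => Real.log 2) atTop (𝓝 (Real.log 2)))
  rw [sub_self, zero_add] at h
  apply h.congr'
  filter_upwards [eventually_ge_atTop 1] with N hN
  have hN' : (0:ℝ) < N := by exact_mod_cast hN
  have hl : Real.log ((4*N : ℕ) : ℝ) = Real.log 2 + Real.log ((2*N : ℕ) : ℝ) := by
    push_cast
    rw [show (4:ℝ)*N = 2*(2*N) by ring, Real.log_mul (by norm_num) (by positivity)]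
  rw [hl]
  ring

private lemma tend3_10 : Tendsto (fun N : ℕ => 1/(4*(N:ℝ)+1) - 1) atTop (𝓝 (-1 : ℝ)) := by
  have h : Tendsto (fun N : ℕ => 4*(N:ℝ)+1) atTop atTop := by
    apply tendsto_atTop_add_const_right
    exact (tendsto_natCast_atTop_atTop).const_mul_atTop (by norm_num)
  have := (tendsto_const_nhds.div_atTop h : Tendsto (fun N : ℕ => (1:ℝ)/(4*(N:ℝ)+1)) atTop (𝓝 0))
  simpa using this.sub (tendsto_const_nhds : Tendsto (fun _ : ℕ => (1:ℝ)) atTop (𝓝 1))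

private lemma gg10_tendsto : Tendsto (fun N : ℕ => ∑ n ∈ Finset.range N, gg10 n) atTop
    (𝓝 ((1 / 3) * (4 * Real.log 2 - π / 2 - 1))) := by
  have hps : ∀ N : ℕ, ∑ n ∈ Finset.range N, gg10 n =
      (1/3) * (-2 * (∑ n ∈ Finset.range N, (1/(4*(n:ℝ)+1) - 1/(4*(n:ℝ)+3)))
        + 4 * (∑ n ∈ Finset.range N,
            (1/(4*(n:ℝ)+1) - 1/(4*(n:ℝ)+2) + 1/(4*(n:ℝ)+3) - 1/(4*(n:ℝ)+4)))
        + (∑ n ∈ Finset.range N, (1/(4*(n:ℝ)+5) - 1/(4*(n:ℝ)+1)))) := by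
    intro N
    rw [Finset.mul_sum, Finset.mul_sum, ← Finset.sum_add_distrib, ← Finset.sum_add_distrib,
      Finset.mul_sum]
    apply Finset.sum_congr rfl
    intro n _
    have hx : (0:ℝ) ≤ (n:ℝ) := Nat.cast_nonneg n
    unfold gg10
    have h1 : 4*(n:ℝ)+1 ≠ 0 := by positivity
    have h2 : 4*(n:ℝ)+2 ≠ 0 := by positivity
    have h3 : 4*(n:ℝ)+3 ≠ 0 := by positivity
    have h4 : 4*(n:ℝ)+4 ≠ 0 := by positivity
    have h5 : 4*(n:ℝ)+5 ≠ 0 := by positivity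
    have h6 : (n:ℝ)+1 ≠ 0 := by positivity
    have h7 : 2*(n:ℝ)+1 ≠ 0 := by positivity
    field_simp
    ring
  simp only [hps, psum1_10, psum2_10, psum3_10]
  have h := (((tend1_10.const_mul (-2:ℝ)).add (tend2_10.const_mul (4:ℝ))).add
    tend3_10).const_mul (1/3 : ℝ)
  convert h using 2
  ring

theorem stmt_10 : HasSum (fun n : ℕ+ => 1 / ((n : ℝ) * (2*(n : ℝ)-1) * (4*(n : ℝ)+1) * (4*(n : ℝ)-1) * (4*(n : ℝ)-3))) ((1 / 3) * (4 * Real.log 2 - π / 2 - 1)) := by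
  apply (Equiv.hasSum_iff (Equiv.pnatEquivNat.symm)).mp
  have hfun : ((fun n : ℕ+ => 1 / ((n : ℝ) * (2*(n : ℝ)-1) * (4*(n : ℝ)+1) * (4*(n : ℝ)-1)
      * (4*(n : ℝ)-3))) ∘ Equiv.pnatEquivNat.symm) = gg10 := by
    funext n
    have hc : ((Equiv.pnatEquivNat.symm n : ℕ+) : ℝ) = (n:ℝ) + 1 := by
      simp [Equiv.pnatEquivNat]
    simp only [Function.comp_apply, hc, gg10]
    ring_nf
  rw [hfun]
  have hsum := gg10_summable.hasSum
  rwa [tendsto_nhds_unique hsum.tendsto_sum_nat gg10_tendsto] at hsum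
end
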